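/- Let m ≥ 1 and let v¹, v², v³ : Fin m → (Fin m → ℝ((t))) be three families of vectors in 𝕂^m, and let L_a (a = 1,2,3) denote the 𝒪-submodule of 𝕂^m spanned by {v^a₀, …, v^a_{m−1}}. Fix i, j, k ≥ 0 with i + j + k = m. Let u : Fin i → 𝕂^m, w : Fin j → 𝕂^m, z : Fin k → 𝕂^m with every u_l ∈ L₁, every w_l ∈ L₂, every z_l ∈ L₃, and write D(u,w,z) for the determinant of the m×m matrix whose columns are u₀,…,u_{i−1}, w₀,…,w_{j−1}, z₀,…,z_{k−1}. If D(u,w,z) ≠ 0, then there exist strictly monotone maps s₁ : Fin i → Fin m, s₂ : Fin j → Fin m, s₃ : Fin k → Fin m with D(v¹∘s₁, v²∘s₂, v³∘s₃) ≠ 0 and ord(D(u,w,z)) ≥ ord(D(v¹∘s₁, v²∘s₂, v³∘s₃)). (Thus the supremum defining the triple distance function f^t_{ijk} on 𝒪-lattices is attained among determinants of subsets of the given generating vectors.) -/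

import Mathlib

/-!
Expanding every column of `D(u,w,z)` in the generators and using multilinearity writes
`D(u,w,z)` as a sum of power-series multiples of determinants `D(v¹∘r₁, v²∘r₂, v³∘r₃)`.
A summand whose coefficient at `ord D(u,w,z)` is nonzero gives, since power series have
nonnegative order, a nonzero `D(v¹∘r₁, v²∘r₂, v³∘r₃)` of order at most `ord D(u,w,z)`.
Its nonvanishing forces each `rₐ` to be injective, and sorting `rₐ` only changes the sign.
-/

open HahnSeries

/-- Given `i + j + k = m` and families `u : Fin i → 𝕂^m`, `w : Fin j → 𝕂^m`,
`z : Fin k → 𝕂^m`, `detCols` is the determinant of the `m × m` matrix whose columns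
are `u₀, …, u_{i-1}, w₀, …, w_{j-1}, z₀, …, z_{k-1}`. -/
noncomputable def detCols {m i j k : ℕ} (h : i + j + k = m)
    (u : Fin i → Fin m → LaurentSeries ℝ) (w : Fin j → Fin m → LaurentSeries ℝ)
    (z : Fin k → Fin m → LaurentSeries ℝ) : LaurentSeries ℝ :=
  Matrix.det (Matrix.of fun r c =>
    (Fin.append (Fin.append u w) z) (Fin.cast h.symm c) r)

theorem HahnSeries.exists_ne_zero_order_le_of_sum_ne_zero {Γ R ι : Type*} [LinearOrder Γ]
    [Zero Γ] [AddCommMonoid R] {s : Finset ι} {x : ι → HahnSeries Γ R}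
    (h : ∑ i ∈ s, x i ≠ 0) : ∃ i ∈ s, x i ≠ 0 ∧ (x i).order ≤ (∑ i ∈ s, x i).order := by
  have hc := coeff_order_eq_zero.not.mpr h
  rw [coeff_sum] at hc
  obtain ⟨i, hi, hne⟩ := Finset.exists_ne_zero_of_sum_ne_zero hc
  exact ⟨i, hi, ne_zero_of_coeff_ne_zero hne, order_le_of_coeff_ne_zero hne⟩

theorem HahnSeries.order_units_zsmul {Γ R : Type*} [Zero Γ] [PartialOrder Γ] [AddCommGroup R]
    (ε : ℤˣ) (x : HahnSeries Γ R) : (ε • x).order = x.order := by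
  rcases Int.units_eq_one_or ε with rfl | rfl <;> simp [Units.smul_def, order_neg]

namespace LaurentSeries

variable {F : Type*}

theorem order_coe_nonneg [Semiring F] (P : PowerSeries F) : 0 ≤ (P : LaurentSeries F).order := by
  by_contra! h
  have hP : (P : LaurentSeries F) ≠ 0 := fun h0 => by simp [h0] at h
  exact coeff_order_eq_zero.not.mpr hP (by rw [PowerSeries.coeff_coe, if_pos h])

theorem le_order_powerSeries_smul [CommRing F] [IsDomain F] {P : PowerSeries F}
    {x : LaurentSeries F} (h : P • x ≠ 0) : x.order ≤ (P • x).order := by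
  rw [Algebra.smul_def] at h ⊢
  rw [order_mul (left_ne_zero_of_mul h) (right_ne_zero_of_mul h)]
  exact le_add_of_nonneg_left (order_coe_nonneg P)

end LaurentSeries

theorem MultilinearMap.exists_ne_zero_order_le_of_mem_span {F ι κ M : Type*} [CommRing F]
    [IsDomain F] [Fintype ι] [DecidableEq ι] [Fintype κ] [AddCommMonoid M] [Module (PowerSeries F) M]
    (f : MultilinearMap (PowerSeries F) (fun _ : ι => M) (LaurentSeries F))
    (g : ι → κ → M) {a : ι → M}
    (ha : ∀ l, a l ∈ Submodule.span (PowerSeries F) (Set.range (g l))) (hf : f a ≠ 0) :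
    ∃ r : ι → κ, f (fun l => g l (r l)) ≠ 0 ∧ (f fun l => g l (r l)).order ≤ (f a).order := by
  choose C hC using fun l => (Submodule.mem_span_range_iff_exists_fun _).mp (ha l)
  have expansion : f a = ∑ r : ι → κ, (∏ l, C l (r l)) • f (fun l => g l (r l)) := by
    rw [show a = fun l => ∑ p, C l p • g l p from funext fun l => (hC l).symm, f.map_sum]
    simp_rw [f.map_smul_univ]
  rw [expansion] at hf ⊢
  obtain ⟨r, -, hr, hle⟩ := HahnSeries.exists_ne_zero_order_le_of_sum_ne_zero hf
  exact ⟨r, right_ne_zero_of_smul hr, (LaurentSeries.le_order_powerSeries_smul hr).trans hle⟩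

theorem Function.Injective.strictMono_comp_sort {α : Type*} [LinearOrder α] {n : ℕ}
    {r : Fin n → α} (hr : r.Injective) : StrictMono (r ∘ Tuple.sort r) :=
  (Tuple.monotone_sort r).strictMono_of_injective (hr.comp (Tuple.sort r).injective)

theorem Fin.append_comp_permCongr_sumCongr {α : Type*} {a b : ℕ} (x : Fin a → α)
    (y : Fin b → α) (σ : Equiv.Perm (Fin a)) (τ : Equiv.Perm (Fin b)) :
    Fin.append x y ∘ finSumFinEquiv.permCongr (σ.sumCongr τ) = Fin.append (x ∘ σ) (y ∘ τ) := by
  funext l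
  refine Fin.addCases (fun l => ?_) (fun l => ?_) l <;> simp [Equiv.permCongr_apply]

theorem Fin.append_append_const_apply {α β : Type*} {a b c : ℕ} (v₁ v₂ v₃ : α → β)
    (r : Fin (a + b + c) → α) :
    (fun l => Fin.append (Fin.append (fun _ : Fin a => v₁) (fun _ : Fin b => v₂))
        (fun _ : Fin c => v₃) l (r l)) =
      Fin.append (Fin.append (v₁ ∘ r ∘ Fin.castAdd c ∘ Fin.castAdd b)
        (v₂ ∘ r ∘ Fin.castAdd c ∘ Fin.natAdd a)) (v₃ ∘ r ∘ Fin.natAdd (a + b)) := by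
  funext l
  refine Fin.addCases (Fin.addCases (fun l => ?_) (fun l => ?_)) (fun l => ?_) l <;> simp

section detCols

variable {m i j k : ℕ} (h : i + j + k = m)

theorem detCols_eq_domDomCongr (u : Fin i → Fin m → LaurentSeries ℝ)
    (w : Fin j → Fin m → LaurentSeries ℝ) (z : Fin k → Fin m → LaurentSeries ℝ) :
    detCols h u w z =
      Matrix.detRowAlternating.domDomCongr (finCongr h.symm) (Fin.append (Fin.append u w) z) := by
  rw [detCols, ← Matrix.det_transpose]
  rfl

theorem detCols_comp_perm (u : Fin i → Fin m → LaurentSeries ℝ)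
    (w : Fin j → Fin m → LaurentSeries ℝ) (z : Fin k → Fin m → LaurentSeries ℝ)
    (σ₁ : Equiv.Perm (Fin i)) (σ₂ : Equiv.Perm (Fin j)) (σ₃ : Equiv.Perm (Fin k)) :
    detCols h (u ∘ σ₁) (w ∘ σ₂) (z ∘ σ₃) =
      (Equiv.Perm.sign σ₁ * Equiv.Perm.sign σ₂ * Equiv.Perm.sign σ₃) • detCols h u w z := by
  simp only [detCols_eq_domDomCongr, ← Fin.append_comp_permCongr_sumCongr,
    AlternatingMap.map_perm, Equiv.Perm.sign_permCongr, Equiv.Perm.sign_sumCongr]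

theorem injective_of_detCols_ne_zero {u : Fin i → Fin m → LaurentSeries ℝ}
    {w : Fin j → Fin m → LaurentSeries ℝ} {z : Fin k → Fin m → LaurentSeries ℝ}
    (hD : detCols h u w z ≠ 0) : u.Injective ∧ w.Injective ∧ z.Injective := by
  rw [detCols_eq_domDomCongr] at hD
  have hinj := not_imp_comm.mp (AlternatingMap.map_eq_zero_of_not_injective _ _) hD
  simp only [Fin.append_injective_iff] at hinj
  exact ⟨hinj.1.1, hinj.1.2.1, hinj.2.1⟩

theorem exists_detCols_ne_zero_order_le_of_mem_span {κ : Type*} [Fintype κ]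
    (v₁ v₂ v₃ : κ → Fin m → LaurentSeries ℝ) {u : Fin i → Fin m → LaurentSeries ℝ}
    {w : Fin j → Fin m → LaurentSeries ℝ} {z : Fin k → Fin m → LaurentSeries ℝ}
    (hu : ∀ l, u l ∈ Submodule.span (PowerSeries ℝ) (Set.range v₁))
    (hw : ∀ l, w l ∈ Submodule.span (PowerSeries ℝ) (Set.range v₂))
    (hz : ∀ l, z l ∈ Submodule.span (PowerSeries ℝ) (Set.range v₃))
    (hD : detCols h u w z ≠ 0) :
    ∃ (r₁ : Fin i → κ) (r₂ : Fin j → κ) (r₃ : Fin k → κ),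
      detCols h (v₁ ∘ r₁) (v₂ ∘ r₂) (v₃ ∘ r₃) ≠ 0 ∧
      (detCols h (v₁ ∘ r₁) (v₂ ∘ r₂) (v₃ ∘ r₃)).order ≤ (detCols h u w z).order := by
  set g := Fin.append (Fin.append (fun _ : Fin i => v₁) (fun _ : Fin j => v₂))
    (fun _ : Fin k => v₃)
  have hspan : ∀ l, Fin.append (Fin.append u w) z l ∈
      Submodule.span (PowerSeries ℝ) (Set.range (g l)) :=
    Fin.addCases (Fin.addCases (by simpa [g] using hu) (by simpa [g] using hw))
      (by simpa [g] using hz)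
  rw [detCols_eq_domDomCongr] at hD
  obtain ⟨r, hr, hle⟩ := MultilinearMap.exists_ne_zero_order_le_of_mem_span
    ((Matrix.detRowAlternating.domDomCongr (finCongr h.symm)).toMultilinearMap.restrictScalars
      (PowerSeries ℝ)) g hspan hD
  simp only [MultilinearMap.coe_restrictScalars, AlternatingMap.coe_multilinearMap, g,
    Fin.append_append_const_apply, ← detCols_eq_domDomCongr h] at hr hle
  exact ⟨_, _, _, hr, hle⟩

theorem exists_strictMono_detCols_eq_units_smul {ι : Type*} [LinearOrder ι]
    (v₁ v₂ v₃ : ι → Fin m → LaurentSeries ℝ) {r₁ : Fin i → ι} {r₂ : Fin j → ι} {r₃ : Fin k → ι}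
    (hD : detCols h (v₁ ∘ r₁) (v₂ ∘ r₂) (v₃ ∘ r₃) ≠ 0) :
    ∃ (s₁ : Fin i → ι) (s₂ : Fin j → ι) (s₃ : Fin k → ι),
      StrictMono s₁ ∧ StrictMono s₂ ∧ StrictMono s₃ ∧
      ∃ ε : ℤˣ, detCols h (v₁ ∘ s₁) (v₂ ∘ s₂) (v₃ ∘ s₃) =
        ε • detCols h (v₁ ∘ r₁) (v₂ ∘ r₂) (v₃ ∘ r₃) := by
  obtain ⟨h₁, h₂, h₃⟩ := injective_of_detCols_ne_zero h hD
  exact ⟨_, _, _, h₁.of_comp.strictMono_comp_sort, h₂.of_comp.strictMono_comp_sort,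
    h₃.of_comp.strictMono_comp_sort, _, detCols_comp_perm h (v₁ ∘ r₁) (v₂ ∘ r₂) (v₃ ∘ r₃)
      (Tuple.sort r₁) (Tuple.sort r₂) (Tuple.sort r₃)⟩

end detCols

theorem detCols_order_ge_subset_general {m : ℕ}
    (v₁ v₂ v₃ : Fin m → (Fin m → LaurentSeries ℝ))
    {i j k : ℕ} (hijk : i + j + k = m)
    (u : Fin i → Fin m → LaurentSeries ℝ) (w : Fin j → Fin m → LaurentSeries ℝ)
    (z : Fin k → Fin m → LaurentSeries ℝ)
    (hu : ∀ l, u l ∈ Submodule.span (PowerSeries ℝ) (Set.range v₁))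
    (hw : ∀ l, w l ∈ Submodule.span (PowerSeries ℝ) (Set.range v₂))
    (hz : ∀ l, z l ∈ Submodule.span (PowerSeries ℝ) (Set.range v₃))
    (hD : detCols hijk u w z ≠ 0) :
    ∃ (s₁ : Fin i → Fin m) (s₂ : Fin j → Fin m) (s₃ : Fin k → Fin m),
      StrictMono s₁ ∧ StrictMono s₂ ∧ StrictMono s₃ ∧
      detCols hijk (v₁ ∘ s₁) (v₂ ∘ s₂) (v₃ ∘ s₃) ≠ 0 ∧
      (detCols hijk (v₁ ∘ s₁) (v₂ ∘ s₂) (v₃ ∘ s₃)).order ≤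
        (detCols hijk u w z).order := by
  obtain ⟨r₁, r₂, r₃, hr, hle⟩ :=
    exists_detCols_ne_zero_order_le_of_mem_span hijk v₁ v₂ v₃ hu hw hz hD
  obtain ⟨s₁, s₂, s₃, h₁, h₂, h₃, ε, hε⟩ :=
    exists_strictMono_detCols_eq_units_smul hijk v₁ v₂ v₃ hr
  refine ⟨s₁, s₂, s₃, h₁, h₂, h₃, ?_, ?_⟩ <;> rw [hε]
  · exact (smul_ne_zero_iff_ne ε).mpr hr
  · rwa [HahnSeries.order_units_zsmul]

/-- The supremum defining the triple distance function `f^t_{ijk}` on `𝒪`-lattices is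
attained among determinants of subsets of the given generating vectors: if `u`, `w`, `z`
are families of elements of the lattices `L₁`, `L₂`, `L₃` spanned over `𝒪 = ℝ[[t]]` by
`v¹`, `v²`, `v³` respectively, and `D(u,w,z) ≠ 0`, then there are strictly monotone
selections `s₁, s₂, s₃` of columns with `D(v¹∘s₁, v²∘s₂, v³∘s₃) ≠ 0` and
`ord D(u,w,z) ≥ ord D(v¹∘s₁, v²∘s₂, v³∘s₃)`. -/
theorem detCols_order_ge_subset {m : ℕ} (hm : 1 ≤ m)
    (v₁ v₂ v₃ : Fin m → (Fin m → LaurentSeries ℝ))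
    {i j k : ℕ} (hijk : i + j + k = m)
    (u : Fin i → Fin m → LaurentSeries ℝ) (w : Fin j → Fin m → LaurentSeries ℝ)
    (z : Fin k → Fin m → LaurentSeries ℝ)
    (hu : ∀ l, u l ∈ Submodule.span (PowerSeries ℝ) (Set.range v₁))
    (hw : ∀ l, w l ∈ Submodule.span (PowerSeries ℝ) (Set.range v₂))
    (hz : ∀ l, z l ∈ Submodule.span (PowerSeries ℝ) (Set.range v₃))
    (hD : detCols hijk u w z ≠ 0) :
    ∃ (s₁ : Fin i → Fin m) (s₂ : Fin j → Fin m) (s₃ : Fin k → Fin m),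
      StrictMono s₁ ∧ StrictMono s₂ ∧ StrictMono s₃ ∧
      detCols hijk (v₁ ∘ s₁) (v₂ ∘ s₂) (v₃ ∘ s₃) ≠ 0 ∧
      (detCols hijk (v₁ ∘ s₁) (v₂ ∘ s₂) (v₃ ∘ s₃)).order ≤
        (detCols hijk u w z).order :=
  detCols_order_ge_subset_general v₁ v₂ v₃ hijk u w z hu hw hz hD
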